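/- Let R be a commutative ring, g ≥ 1, and let L be the free Lie algebra over R on a free R-module V with basis e₁, …, e_g, f₁, …, f_g. Set ω := Σ_{i=1}^g ⁅eᵢ, fᵢ⁆ ∈ L. Then the image of the R-linear evaluation map Der(L) → L, D ↦ D(ω), where Der(L) is the module of derivations of L (R-linear maps D : L → L with D⁅x,y⁆ = ⁅D x, y⁆ + ⁅x, D y⁆), is exactly the derived ideal ⁅L, L⁆. In particular, evaluation at ω is a surjection of Der(L) onto ⁅L, L⁆ whose kernel is the module Der_ω(L) of derivations vanishing on ω. (The surjectivity underlying the exact row identifying Der_ω in the paper's computation of π_*Maps_∂(W_{g,1}, W_{g,1}), where ω is the attaching class of W_{g,1}.) -/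

import Mathlib

/-!
A derivation of a free Lie algebra `L` with values in `M` can be prescribed arbitrarily on the
generators: lift `x ↦ (φ x, x)` to a Lie algebra map from `L` into the semidirect sum `M ⋊ L` with
abelian ideal `M`; its `M`-component is the derivation. Prescribing `v` on `fᵢ` and `0` elsewhere
gives `D ω = ⁅eᵢ, v⁆`, and prescribing `-v` on `eᵢ` gives `D ω = ⁅fᵢ, v⁆`. As `L` is generated by
the `eᵢ, fᵢ`, the Jacobi identity shows that such brackets span `⁅L, L⁆`. Conversely, the Leibniz
rule writes `D ω` as a sum of brackets.
-/

def AbelianLieAlgebra (M : Type*) := M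

namespace AbelianLieAlgebra

variable {R L M : Type*} [CommRing R] [LieRing L] [LieAlgebra R L]
  [AddCommGroup M] [Module R M] [LieRingModule L M] [LieModule R L M]

instance : AddCommGroup (AbelianLieAlgebra M) := inferInstanceAs (AddCommGroup M)

instance : Module R (AbelianLieAlgebra M) := inferInstanceAs (Module R M)

instance : LieRingModule L (AbelianLieAlgebra M) := inferInstanceAs (LieRingModule L M)

instance : LieModule R L (AbelianLieAlgebra M) := inferInstanceAs (LieModule R L M)

instance : LieRing (AbelianLieAlgebra M) where
  bracket _ _ := 0
  add_lie _ _ _ := (add_zero 0).symm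
  lie_add _ _ _ := (add_zero 0).symm
  lie_self _ := rfl
  leibniz_lie _ _ _ := (add_zero 0).symm

instance : LieAlgebra R (AbelianLieAlgebra M) where
  lie_smul r _ _ := (smul_zero r).symm

instance : IsLieAbelian (AbelianLieAlgebra M) := ⟨fun _ _ => rfl⟩

variable (R L M) in
def toEndDerivation : L →ₗ⁅R⁆ LieDerivation R (AbelianLieAlgebra M) (AbelianLieAlgebra M) where
  toFun x := ⟨LieModule.toEnd R L (AbelianLieAlgebra M) x, fun _ _ => by simp [trivial_lie_zero]⟩
  map_add' _ _ := by ext; simp [LieDerivation.mk_coe]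
  map_smul' _ _ := by ext; simp [LieDerivation.mk_coe]
  map_lie' := by intro x y; ext; simp [LieDerivation.mk_coe]

open LieAlgebra

def derivationOfSection
    (s : L →ₗ⁅R⁆ AbelianLieAlgebra M ⋊⁅toEndDerivation R L M⁆ L)
    (hs : (SemiDirectSum.projr _).comp s = LieHom.id) : LieDerivation R L M where
  toLinearMap := SemiDirectSum.projl _ ∘ₗ s.toLinearMap
  leibniz' a b := by
    have hright (x : L) : (s x).right = x := LieHom.congr_fun hs x
    have h := congrArg SemiDirectSum.left (s.map_lie a b)
    simp only [SemiDirectSum.lie_eq_mk, hright, trivial_lie_zero, zero_add] at h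
    exact h

lemma derivationOfSection_apply (s : L →ₗ⁅R⁆ AbelianLieAlgebra M ⋊⁅toEndDerivation R L M⁆ L)
    (hs : (SemiDirectSum.projr _).comp s = LieHom.id) (x : L) :
    derivationOfSection s hs x = (s x).left := rfl

end AbelianLieAlgebra

namespace LieDerivation

variable {R L M : Type*} [CommRing R] [LieRing L] [LieAlgebra R L]
  [AddCommGroup M] [Module R M] [LieRingModule L M] [LieModule R L M]

def eval (x : L) : LieDerivation R L M →ₗ[R] M where
  toFun D := D x
  map_add' _ _ := rfl
  map_smul' _ _ := rfl

@[simp] lemma eval_apply (x : L) (D : LieDerivation R L M) : eval x D = D x := rfl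

lemma setOf_leibniz_apply_eq_range_eval (x : L) :
    {z | ∃ D : L →ₗ[R] L, (∀ a b, D ⁅a, b⁆ = ⁅D a, b⁆ + ⁅a, D b⁆) ∧ D x = z} =
      LinearMap.range (eval (R := R) (M := L) x) := by
  ext z
  constructor
  · rintro ⟨D, hD, rfl⟩
    exact ⟨⟨D, fun a b => by rw [hD, ← lie_skew]; abel⟩, rfl⟩
  · rintro ⟨D, rfl⟩
    exact ⟨D, fun a b => (D.apply_lie_eq_add a b).trans (add_comm _ _), rfl⟩

end LieDerivation

theorem span_lie_le_span_lie_left_of_lieSpan_eq_top {R L : Type*} [CommRing R] [LieRing L]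
    [LieAlgebra R L] {S : Set L} (hS : LieSubalgebra.lieSpan R L S = ⊤) :
    Submodule.span R {z : L | ∃ x y : L, z = ⁅x, y⁆} ≤
      Submodule.span R (Set.image2 (⁅·, ·⁆) S Set.univ) := by
  refine Submodule.span_le.2 ?_
  rintro _ ⟨x, y, rfl⟩
  have hx : x ∈ LieSubalgebra.lieSpan R L S := hS ▸ LieSubalgebra.mem_top x
  induction hx using LieSubalgebra.lieSpan_induction generalizing y with
  | mem s hs => exact Submodule.subset_span ⟨s, hs, y, trivial, rfl⟩
  | zero => simp
  | add a b _ _ ha hb => rw [add_lie]; exact add_mem (ha y) (hb y)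
  | smul r a _ ha => rw [smul_lie]; exact Submodule.smul_mem _ r (ha y)
  | lie a b _ _ ha hb => rw [lie_lie]; exact sub_mem (ha _) (hb _)

namespace FreeLieAlgebra

variable (R : Type*) [CommRing R] {X M : Type*} [AddCommGroup M] [Module R M]
  [LieRingModule (FreeLieAlgebra R X) M] [LieModule R (FreeLieAlgebra R X) M]

theorem lieSpan_range_of : LieSubalgebra.lieSpan R (FreeLieAlgebra R X) (Set.range (of R)) = ⊤ := by
  set S := LieSubalgebra.lieSpan R (FreeLieAlgebra R X) (Set.range (of R))
  let G : FreeLieAlgebra R X →ₗ⁅R⁆ S := lift R fun x => ⟨of R x, LieSubalgebra.subset_lieSpan ⟨x, rfl⟩⟩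
  have hG : S.incl.comp G = LieHom.id := hom_ext fun x => by simp [G]
  refine eq_top_iff.2 fun z _ => ?_
  have hz : (G z : FreeLieAlgebra R X) = z := LieHom.congr_fun hG z
  exact hz ▸ (G z).2

noncomputable def liftDerivation (φ : X → M) : LieDerivation R (FreeLieAlgebra R X) M :=
  AbelianLieAlgebra.derivationOfSection (lift R fun x => ⟨φ x, of R x⟩) (hom_ext fun x => by simp)

@[simp] lemma liftDerivation_of (φ : X → M) (x : X) : liftDerivation R φ (of R x) = φ x := by
  simp [liftDerivation, AbelianLieAlgebra.derivationOfSection_apply]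

lemma lie_of_mem_range_eval_sum_lie {ι : Type*} [Fintype ι] [DecidableEq ι] (b : ι ⊕ ι)
    (v : FreeLieAlgebra R (ι ⊕ ι)) :
    ⁅of R b, v⁆ ∈ LinearMap.range (LieDerivation.eval (R := R) (M := FreeLieAlgebra R (ι ⊕ ι))
      (∑ i, ⁅of R (Sum.inl i : ι ⊕ ι), of R (Sum.inr i : ι ⊕ ι)⁆)) := by
  rcases b with i | i
  · refine ⟨liftDerivation R (Pi.single (Sum.inr i) v), ?_⟩
    simp [Pi.single_apply, apply_ite]
  · refine ⟨liftDerivation R (Pi.single (Sum.inl i) (-v)), ?_⟩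
    simp [Pi.single_apply, apply_ite]

end FreeLieAlgebra

theorem stmt7_general (R : Type*) [CommRing R] (g : ℕ) :
    {z : FreeLieAlgebra R (Fin g ⊕ Fin g) |
        ∃ D : FreeLieAlgebra R (Fin g ⊕ Fin g) →ₗ[R] FreeLieAlgebra R (Fin g ⊕ Fin g),
          (∀ x y : FreeLieAlgebra R (Fin g ⊕ Fin g), D ⁅x, y⁆ = ⁅D x, y⁆ + ⁅x, D y⁆) ∧
          D (∑ i : Fin g,
              ⁅FreeLieAlgebra.of R (Sum.inl i : Fin g ⊕ Fin g), FreeLieAlgebra.of R (Sum.inr i : Fin g ⊕ Fin g)⁆) = z} =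
      ↑(Submodule.span R
          {z : FreeLieAlgebra R (Fin g ⊕ Fin g) |
            ∃ x y : FreeLieAlgebra R (Fin g ⊕ Fin g), z = ⁅x, y⁆}) := by
  rw [LieDerivation.setOf_leibniz_apply_eq_range_eval]
  congr 1
  refine le_antisymm ?_ ?_
  · rintro _ ⟨D, rfl⟩
    simp only [LieDerivation.eval_apply, map_sum, LieDerivation.apply_lie_eq_add]
    exact Submodule.sum_mem _ fun i _ =>
      add_mem (Submodule.subset_span ⟨_, _, rfl⟩) (Submodule.subset_span ⟨_, _, rfl⟩)
  · refine (span_lie_le_span_lie_left_of_lieSpan_eq_top (FreeLieAlgebra.lieSpan_range_of R)).trans ?_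
    refine Submodule.span_le.2 ?_
    rintro _ ⟨_, ⟨b, rfl⟩, v, -, rfl⟩
    exact FreeLieAlgebra.lie_of_mem_range_eval_sum_lie R b v

/-- let `L` be the free Lie algebra over `R` on generators
`e₁, …, e_g, f₁, …, f_g` and `ω := Σᵢ ⁅eᵢ, fᵢ⁆`.  The image of the evaluation map
`Der(L) → L`, `D ↦ D(ω)`, on derivations of `L` is exactly the derived ideal `⁅L, L⁆`,
i.e. the `R`-submodule generated by all brackets. -/
theorem stmt7 (R : Type*) [CommRing R] (g : ℕ) (hg : 1 ≤ g) :
    {z : FreeLieAlgebra R (Fin g ⊕ Fin g) |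
        ∃ D : FreeLieAlgebra R (Fin g ⊕ Fin g) →ₗ[R] FreeLieAlgebra R (Fin g ⊕ Fin g),
          (∀ x y : FreeLieAlgebra R (Fin g ⊕ Fin g), D ⁅x, y⁆ = ⁅D x, y⁆ + ⁅x, D y⁆) ∧
          D (∑ i : Fin g,
              ⁅FreeLieAlgebra.of R (Sum.inl i : Fin g ⊕ Fin g), FreeLieAlgebra.of R (Sum.inr i : Fin g ⊕ Fin g)⁆) = z} =
      ↑(Submodule.span R
          {z : FreeLieAlgebra R (Fin g ⊕ Fin g) |
            ∃ x y : FreeLieAlgebra R (Fin g ⊕ Fin g), z = ⁅x, y⁆}) :=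
  stmt7_general R g
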